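/- Conversely, if a vertex v of a finite graph G cannot be separated from a vertex set S (with v ∉ S) by any set of at most 2 vertices avoiding v, then there is a 3-fan from v to S in G: three paths from v to S that are pairwise disjoint except in v. -/

import Mathlib

/-- A `3`-fan from `v` to a set `S`: three nontrivial paths from `v` to `S`
that pairwise intersect only in their common first vertex `v`. -/
structure ThreeFan {α : Type} (G : SimpleGraph α) (v : α) (S : Set α) where
  t : Fin 3 → α
  mem : ∀ i, t i ∈ S
  walk : ∀ i, G.Walk v (t i)
  isPath : ∀ i, (walk i).IsPath
  nontrivial : ∀ i, ¬ (walk i).Nil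
  disj : ∀ i j, i ≠ j → ∀ x, x ∈ (walk i).support → x ∈ (walk j).support → x = v

/-!
Deleting the edges at `v` turns the claim into Menger's theorem for `k = 3` between the
neighbourhood `N(v)` and `S`: a set of at most two vertices meeting every `N(v)`–`S` walk in
`G - v` would separate `v` from `S`, and three disjoint `N(v)`–`S` paths in `G - v` become a
`3`-fan once each is prefixed by its edge from `v`.

Menger's theorem holds for every `k`, by induction on the edges (Göring's proof). Take an
edge `xy` with `y ∈ B`. If `G - xy` has no `A`–`B` separator of size `< k`, induct. Otherwise
let `P` be one; then `P + x` and `P + y` separate `A` from `B` in `G`, so `|P| = k - 1`, and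
every `A`–`(P + x)` and every `(P + y)`–`B` separator of `G - xy` separates `A` from `B` in `G`.
Induction gives `k` disjoint walks from `A` to `P + x` and from `P + y` to `B` in `G - xy`;
cut to meet these sets only at their ends, they meet each other only in `P` and can be glued
along `P` and the edge `xy`.
-/

namespace SimpleGraph

variable {V : Type*} {G H : SimpleGraph V} {A B P : Set V} {k : ℕ}

def Separates (G : SimpleGraph V) (A B X : Set V) : Prop :=
  ∀ ⦃a⦄, a ∈ A → ∀ ⦃b⦄, b ∈ B → ∀ p : G.Walk a b, ∃ x ∈ p.support, x ∈ X

theorem separates_self_left : G.Separates A B A :=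
  fun a ha _ _ p ↦ ⟨a, p.start_mem_support, ha⟩

theorem separates_self_right : G.Separates A B B :=
  fun _ _ b hb p ↦ ⟨b, p.end_mem_support, hb⟩

theorem separates_inter_of_forall_not_adj (h : ∀ x, ∀ y ∈ B, ¬G.Adj x y) :
    G.Separates A B (A ∩ B) := by
  intro a ha b hb p
  by_cases hp : p.Nil
  · obtain rfl := hp.eq
    exact ⟨a, p.start_mem_support, ha, hb⟩
  · exact absurd (p.adj_penultimate hp) (h _ b hb)

namespace Walk

theorem exists_isPath_to_first_mem {a b : V} (p : G.Walk a b) {T : Set V}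
    (hT : ∃ x ∈ p.support, x ∈ T) :
    ∃ u ∈ T, ∃ q : G.Walk a u,
      q.IsPath ∧ q.support ⊆ p.support ∧ ∀ x ∈ q.support, x ∈ T → x = u := by
  classical
  suffices ∃ u ∈ T, ∃ q : G.Walk a u, q.support ⊆ p.support ∧ ∀ x ∈ q.support, x ∈ T → x = u by
    obtain ⟨u, hu, q, hsub, hfirst⟩ := this
    exact ⟨u, hu, q.bypass, q.bypass_isPath, fun x hx ↦ hsub (q.support_bypass_subset_support hx),
      fun x hx ↦ hfirst x (q.support_bypass_subset_support hx)⟩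
  induction p with
  | nil =>
    obtain ⟨x, hx, hxT⟩ := hT
    obtain rfl : x = _ := by simpa using hx
    exact ⟨x, hxT, nil, by simp, by simp⟩
  | @cons a c b hac p ih =>
    by_cases ha : a ∈ T
    · exact ⟨a, ha, nil, by simp, by simp⟩
    obtain ⟨x, hx, hxT⟩ := hT
    have hx' : x ∈ p.support := (List.mem_cons.mp hx).resolve_left fun h ↦ ha (h ▸ hxT)
    obtain ⟨u, hu, q, hsub, hfirst⟩ := ih ⟨x, hx', hxT⟩
    refine ⟨u, hu, cons hac q, ?_, ?_⟩
    · simpa using List.cons_subset_cons a hsub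
    · simp only [support_cons, List.mem_cons, forall_eq_or_imp]
      exact ⟨fun haT ↦ absurd haT ha, hfirst⟩

theorem IsPath.start_notMem_support_dropUntil [DecidableEq V] {u v w : V} {p : G.Walk u v}
    (hp : p.IsPath) (hw : w ∈ p.support) (h : u ≠ w) : u ∉ (p.dropUntil w hw).support := by
  intro hu
  have hnd := hp.support_nodup
  rw [← p.take_spec hw, support_append, List.nodup_append] at hnd
  rw [← cons_tail_support, List.mem_cons] at hu
  exact hnd.2.2 _ (p.takeUntil w hw).start_mem_support _ (hu.resolve_left h) rfl

end Walk

theorem Separates.end_eq_start_of_mem_support [DecidableEq V] (hP : G.Separates A B P)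
    {a s t b z : V} (ha : a ∈ A) (hb : b ∈ B) {q : G.Walk a s} {r : G.Walk t b}
    (hq : q.IsPath) (hr : r.IsPath) (hqP : ∀ x ∈ q.support, x ∈ P → x = s)
    (hrP : ∀ x ∈ r.support, x ∈ P → x = t) (hzq : z ∈ q.support) (hzr : z ∈ r.support) :
    s = t := by
  obtain ⟨w, hw, hwP⟩ := hP ha hb ((q.takeUntil z hzq).append (r.dropUntil z hzr))
  rcases (Walk.mem_support_append_iff _ _).mp hw with hw | hw
  · obtain rfl := hqP w (q.support_takeUntil_subset_support hzq hw) hwP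
    obtain rfl : z = w := by
      by_contra hne
      exact Walk.endpoint_notMem_support_takeUntil hq hzq (Ne.symm hne) hw
    exact hrP z hzr hwP
  · obtain rfl := hrP w (r.support_dropUntil_subset_support hzr hw) hwP
    obtain rfl : z = w := by
      by_contra hne
      exact hr.start_notMem_support_dropUntil hzr (Ne.symm hne) hw
    exact (hqP z hzq hwP).symm

theorem Separates.of_deleteEdges_left {x y : V} {Z : Set V}
    (hP : (G.deleteEdges {s(x, y)}).Separates A B P) (hxy : x ≠ y) (hyB : y ∈ B)
    (hZ : (G.deleteEdges {s(x, y)}).Separates A (insert x P) Z) : G.Separates A B Z := by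
  intro a ha b hb W
  have hmeet : ∃ u ∈ W.support, u ∈ insert x (insert y P) := by
    by_cases he : s(x, y) ∈ W.edges
    · exact ⟨x, W.fst_mem_support_of_mem_edges he, Set.mem_insert _ _⟩
    · obtain ⟨u, hu, huP⟩ := hP ha hb (W.toDeleteEdge _ he)
      exact ⟨u, by simpa using hu, by simp [huP]⟩
  obtain ⟨u, hu, q, -, hsub, hfirst⟩ := W.exists_isPath_to_first_mem hmeet
  have he : s(x, y) ∉ q.edges := fun he ↦ hxy <|
    (hfirst x (q.fst_mem_support_of_mem_edges he) (by simp)).trans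
      (hfirst y (q.snd_mem_support_of_mem_edges he) (by simp)).symm
  by_cases huZ : u ∈ insert x P
  · obtain ⟨z, hz, hzZ⟩ := hZ ha huZ (q.toDeleteEdge _ he)
    exact ⟨z, hsub (by simpa using hz), hzZ⟩
  · -- `u = y` is impossible, as `q` would then be an `A`–`B` walk in `G - xy` avoiding `P`.
    obtain rfl : u = y := by
      simp only [Set.mem_insert_iff] at hu huZ
      tauto
    obtain ⟨p, hp, hpP⟩ := hP ha hyB (q.toDeleteEdge _ he)
    obtain rfl := hfirst p (by simpa using hp) (by simp [hpP])
    exact absurd (Set.mem_insert_of_mem _ hpP) huZ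

theorem Separates.of_deleteEdges_right {x y : V} {Z : Set V}
    (hP : (G.deleteEdges {s(x, y)}).Separates A B P) (hyB : y ∈ B)
    (hZ : (G.deleteEdges {s(x, y)}).Separates (insert y P) B Z) : G.Separates A B Z := by
  classical
  intro a ha b hb W
  by_cases he : s(x, y) ∈ W.edges
  · obtain ⟨z, hz, hzZ⟩ := hZ (Set.mem_insert y P) hyB Walk.nil
    obtain rfl : z = y := by simpa using hz
    exact ⟨z, W.snd_mem_support_of_mem_edges he, hzZ⟩
  · obtain ⟨p, hp, hpP⟩ := hP ha hb (W.toDeleteEdge _ he)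
    obtain ⟨z, hz, hzZ⟩ :=
      hZ (Set.mem_insert_of_mem y hpP) hb ((W.toDeleteEdge _ he).dropUntil p hp)
    refine ⟨z, ?_, hzZ⟩
    simpa using (W.toDeleteEdge _ he).support_dropUntil_subset_support hp hz

structure DisjointWalks (G : SimpleGraph V) (A B : Set V) (k : ℕ) where
  start : Fin k → V
  finish : Fin k → V
  walk : ∀ i, G.Walk (start i) (finish i)
  start_mem : ∀ i, start i ∈ A
  finish_mem : ∀ i, finish i ∈ B
  pairwise_disjoint : Pairwise fun i j ↦ (walk i).support.Disjoint (walk j).support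

theorem nonempty_disjointWalks_of_le_ncard_inter [Finite V] (h : k ≤ (A ∩ B).ncard) :
    Nonempty (G.DisjointWalks A B k) := by
  obtain ⟨T, hTAB, hTk⟩ := Set.exists_subset_card_eq h
  let e : Fin k ≃ T := (Finite.equivFinOfCardEq (by rwa [Nat.card_coe_set_eq])).symm
  exact ⟨⟨fun i ↦ e i, fun i ↦ e i, fun _ ↦ Walk.nil, fun i ↦ (hTAB (e i).2).1,
    fun i ↦ (hTAB (e i).2).2, fun i j hij ↦ by
      simpa using (Subtype.coe_injective.comp e.injective).ne hij.symm⟩⟩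

namespace DisjointWalks

variable (L : G.DisjointWalks A B k)

theorem start_injective : Function.Injective L.start := fun i j hij ↦ by
  by_contra hne
  exact L.pairwise_disjoint hne (L.walk i).start_mem_support
    (by rw [hij]; exact (L.walk j).start_mem_support)

theorem finish_injective : Function.Injective L.finish := fun i j hij ↦ by
  by_contra hne
  exact L.pairwise_disjoint hne (L.walk i).end_mem_support
    (by rw [hij]; exact (L.walk j).end_mem_support)

theorem exists_start_eq [Finite V] (hA : A.ncard ≤ k) {a : V} (ha : a ∈ A) :
    ∃ i, L.start i = a := by
  have hrange : Set.range L.start = A := by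
    refine Set.eq_of_subset_of_ncard_le (Set.range_subset_iff.mpr L.start_mem) ?_
    rwa [Set.ncard_range_of_injective L.start_injective, Nat.card_fin]
  rw [← hrange] at ha
  exact ha

def mapLe (h : G ≤ H) : H.DisjointWalks A B k where
  start := L.start
  finish := L.finish
  walk i := (L.walk i).mapLe h
  start_mem := L.start_mem
  finish_mem := L.finish_mem
  pairwise_disjoint i j hij := by simpa using L.pairwise_disjoint hij

def reverse : G.DisjointWalks B A k where
  start := L.finish
  finish := L.start
  walk i := (L.walk i).reverse
  start_mem := L.finish_mem
  finish_mem := L.start_mem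
  pairwise_disjoint i j hij := by simpa using L.pairwise_disjoint hij

theorem exists_isPath_forall_mem_eq_finish (L : G.DisjointWalks A B k) :
    ∃ L' : G.DisjointWalks A B k, ∀ i,
      (L'.walk i).IsPath ∧ ∀ x ∈ (L'.walk i).support, x ∈ B → x = L'.finish i := by
  choose u hu q hq hsub hfirst using fun i ↦
    (L.walk i).exists_isPath_to_first_mem ⟨_, (L.walk i).end_mem_support, L.finish_mem i⟩
  exact ⟨⟨L.start, u, q, L.start_mem, hu, fun i j hij x hi hj ↦
    L.pairwise_disjoint hij (hsub i hi) (hsub j hj)⟩, fun i ↦ ⟨hq i, hfirst i⟩⟩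

theorem exists_isPath_forall_mem_eq_start (L : G.DisjointWalks A B k) :
    ∃ L' : G.DisjointWalks A B k, ∀ i,
      (L'.walk i).IsPath ∧ ∀ x ∈ (L'.walk i).support, x ∈ A → x = L'.start i := by
  obtain ⟨L', hL'⟩ := L.reverse.exists_isPath_forall_mem_eq_finish
  exact ⟨L'.reverse, fun i ↦ ⟨(hL' i).1.reverse, by simpa [reverse] using (hL' i).2⟩⟩

end DisjointWalks

theorem exists_walk_of_adj_or_eq {a b : V} (h : G.Adj a b ∨ a = b) :
    ∃ c : G.Walk a b, ∀ z ∈ c.support, z = a ∨ z = b := by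
  rcases h with h | rfl
  · exact ⟨h.toWalk, by simp⟩
  · exact ⟨Walk.nil, by simp⟩

theorem DisjointWalks.nonempty_glue {G' : SimpleGraph V} (hle : G' ≤ G) {C D : Set V}
    (L₁ : G'.DisjointWalks A C k) (L₂ : G'.DisjointWalks D B k) {σ : Fin k → Fin k}
    (hσ : Function.Injective σ)
    (hconn : ∀ i, G.Adj (L₁.finish i) (L₂.start (σ i)) ∨ L₁.finish i = L₂.start (σ i))
    (hcross : ∀ i j, ∀ z ∈ (L₁.walk i).support, z ∈ (L₂.walk (σ j)).support → i = j) :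
    Nonempty (G.DisjointWalks A B k) := by
  choose c hc using fun i ↦ exists_walk_of_adj_or_eq (hconn i)
  let W i := ((L₁.walk i).mapLe hle).append ((c i).append ((L₂.walk (σ i)).mapLe hle))
  have hW : ∀ i, ∀ z ∈ (W i).support, z ∈ (L₁.walk i).support ∨ z ∈ (L₂.walk (σ i)).support := by
    intro i z hz
    simp only [W, Walk.mem_support_append_iff, Walk.support_mapLe_eq_support] at hz
    rcases hz with hz | hz | hz
    · exact .inl hz
    · rcases hc i z hz with rfl | rfl
      · exact .inl (Walk.end_mem_support _)
      · exact .inr (Walk.start_mem_support _)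
    · exact .inr hz
  refine ⟨⟨L₁.start, fun i ↦ L₂.finish (σ i), W, L₁.start_mem, fun i ↦ L₂.finish_mem _,
    fun i j hij z hzi hzj ↦ ?_⟩⟩
  rcases hW i z hzi with hi | hi <;> rcases hW j z hzj with hj | hj
  · exact L₁.pairwise_disjoint hij hi hj
  · exact hij (hcross i j z hi hj)
  · exact hij (hcross j i z hj hi).symm
  · exact L₂.pairwise_disjoint (hσ.ne hij) hi hj

theorem DisjointWalks.nonempty_glue_across_edge [Finite V] {G' : SimpleGraph V} (hle : G' ≤ G)
    {x y : V} (hxy : G.Adj x y) (hx : x ∉ P) (hy : y ∉ P) (hP : G'.Separates A B P)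
    (hPk : P.ncard < k) (L₁ : G'.DisjointWalks A (insert x P) k)
    (hL₁ : ∀ i, (L₁.walk i).IsPath ∧ ∀ z ∈ (L₁.walk i).support, z ∈ insert x P → z = L₁.finish i)
    (L₂ : G'.DisjointWalks (insert y P) B k)
    (hL₂ : ∀ j, (L₂.walk j).IsPath ∧ ∀ z ∈ (L₂.walk j).support, z ∈ insert y P → z = L₂.start j) :
    Nonempty (G.DisjointWalks A B k) := by
  classical
  have hfix : ∀ u ∈ P, Equiv.swap x y u = u := fun u hu ↦
    Equiv.swap_apply_of_ne_of_ne (ne_of_mem_of_not_mem hu hx) (ne_of_mem_of_not_mem hu hy)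
  have hswap_mem : ∀ u ∈ insert x P, Equiv.swap x y u ∈ insert y P := by
    rintro u (rfl | hu)
    · simp
    · simp [hfix u hu, hu]
  -- `σ i` is the `B`-side walk continuing walk `i`: from `y` if walk `i` ends at `x`, and from
  -- its own end, a vertex of `P`, otherwise.
  choose σ hσ using fun i ↦
    L₂.exists_start_eq ((Set.ncard_insert_le y P).trans hPk) (hswap_mem _ (L₁.finish_mem i))
  have hσ_inj : Function.Injective σ := fun i j hij ↦
    L₁.finish_injective <| (Equiv.swap x y).injective <| by rw [← hσ, ← hσ, hij]
  refine L₁.nonempty_glue hle L₂ hσ_inj (fun i ↦ ?_) fun i j z hzi hzj ↦ ?_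
  · rw [hσ]
    rcases L₁.finish_mem i with h | h
    · simp [h, hxy]
    · simp [hfix _ h]
  have hst := hP.end_eq_start_of_mem_support (L₁.start_mem i) (L₂.finish_mem (σ j))
    (hL₁ i).1 (hL₂ (σ j)).1 (fun z hz hzP ↦ (hL₁ i).2 z hz (Set.mem_insert_of_mem _ hzP))
    (fun z hz hzP ↦ (hL₂ _).2 z hz (Set.mem_insert_of_mem _ hzP)) hzi hzj
  have hP' : L₁.finish i ∈ P := by
    rcases L₁.finish_mem i with h | h
    · rcases hst ▸ L₂.start_mem (σ j) with h' | h'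
      · exact absurd (h.symm.trans h') hxy.ne
      · exact absurd (h ▸ h') hx
    · exact h
  exact hσ_inj <| L₂.start_injective <| by rw [hσ, hfix _ hP', hst]

theorem nonempty_disjointWalks_of_forall_separates [Finite V] (G : SimpleGraph V) (A B : Set V)
    (h : ∀ X, G.Separates A B X → k ≤ X.ncard) : Nonempty (G.DisjointWalks A B k) := by
  induction G using WellFoundedLT.induction generalizing A B with
  | _ G ih =>
  by_cases hB : ∀ x, ∀ y ∈ B, ¬G.Adj x y
  · exact nonempty_disjointWalks_of_le_ncard_inter (h _ (separates_inter_of_forall_not_adj hB))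
  push Not at hB
  obtain ⟨x, y, hyB, hxy⟩ := hB
  set G' := G.deleteEdges {s(x, y)}
  have hle : G' ≤ G := G.deleteEdges_le _
  have hlt : G' < G := hle.lt_of_ne fun h ↦ by
    have : G'.Adj x y := h ▸ hxy
    simp [G'] at this
  by_cases hG' : ∀ X, G'.Separates A B X → k ≤ X.ncard
  · obtain ⟨L⟩ := ih G' hlt A B hG'
    exact ⟨L.mapLe hle⟩
  push Not at hG'
  obtain ⟨P, hP, hPk⟩ := hG'
  have h₁ : ∀ Z, G'.Separates A (insert x P) Z → k ≤ Z.ncard := fun Z hZ ↦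
    h Z (hP.of_deleteEdges_left hxy.ne hyB hZ)
  have h₂ : ∀ Z, G'.Separates (insert y P) B Z → k ≤ Z.ncard := fun Z hZ ↦
    h Z (hP.of_deleteEdges_right hyB hZ)
  have hx : x ∉ P := fun hx ↦
    (h₁ _ separates_self_right).not_gt (by rwa [Set.insert_eq_of_mem hx])
  have hy : y ∉ P := fun hy ↦
    (h₂ _ separates_self_left).not_gt (by rwa [Set.insert_eq_of_mem hy])
  obtain ⟨L₁⟩ := ih G' hlt A (insert x P) h₁
  obtain ⟨L₂⟩ := ih G' hlt (insert y P) B h₂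
  obtain ⟨L₁, hL₁⟩ := L₁.exists_isPath_forall_mem_eq_finish
  obtain ⟨L₂, hL₂⟩ := L₂.exists_isPath_forall_mem_eq_start
  exact DisjointWalks.nonempty_glue_across_edge hle hxy hx hy hP hPk L₁ hL₁ L₂ hL₂

theorem Walk.notMem_support_deleteIncidenceSet {v a b : V}
    (p : (G.deleteIncidenceSet v).Walk a b) (ha : a ≠ v) : v ∉ p.support := by
  induction p with
  | nil => simpa using ha.symm
  | cons h p ih =>
    simp only [support_cons, List.mem_cons, not_or]
    exact ⟨ha.symm, ih (deleteIncidenceSet_adj.mp h).2.2⟩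

theorem Separates.exists_mem_support_diff_of_isPath {v w : V} {S X : Set V}
    (hX : (G.deleteIncidenceSet v).Separates (G.neighborSet v) S X) (hw : w ∈ S) (hvw : v ≠ w)
    {p : G.Walk v w} (hp : p.IsPath) : ∃ x ∈ p.support, x ∈ X \ {v} := by
  obtain ⟨c, hvc, q, rfl⟩ := p.exists_eq_cons_of_ne hvw
  have hvq : v ∉ q.support := ((Walk.cons_isPath_iff _ _).mp hp).2
  have hq : ∀ e ∈ q.edges, e ∈ (G.deleteIncidenceSet v).edgeSet := fun e he ↦ by
    rw [edgeSet_deleteIncidenceSet]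
    exact ⟨q.edges_subset_edgeSet he, fun hev ↦ hvq (Walk.mem_support_of_mem_edges he hev.2)⟩
  obtain ⟨x, hx, hxX⟩ := hX hvc hw (q.transfer _ hq)
  rw [Walk.support_transfer] at hx
  exact ⟨x, List.mem_cons_of_mem _ hx, hxX, ne_of_mem_of_not_mem hx hvq⟩

end SimpleGraph

theorem SimpleGraph.DisjointWalks.nonempty_threeFan {V : Type} {G : SimpleGraph V} {v : V}
    {S : Set V} (L : (G.deleteIncidenceSet v).DisjointWalks (G.neighborSet v) S 3) :
    Nonempty (ThreeFan G v S) := by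
  classical
  have hv : ∀ i, v ∉ (L.walk i).support := fun i ↦
    (L.walk i).notMem_support_deleteIncidenceSet (G.ne_of_adj (L.start_mem i)).symm
  let W i : G.Walk v (L.finish i) :=
    .cons (L.start_mem i) ((L.walk i).mapLe (G.deleteIncidenceSet_le v)).bypass
  have hW : ∀ i, ∀ x ∈ (W i).support, x = v ∨ x ∈ (L.walk i).support := by
    intro i x hx
    exact (List.mem_cons.mp hx).imp_right fun hx ↦ by
      simpa using Walk.support_bypass_subset_support _ hx
  refine ⟨⟨L.finish, L.finish_mem, W, fun i ↦ ?_, fun i ↦ Walk.not_nil_cons,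
    fun i j hij x hxi hxj ↦ ?_⟩⟩
  · refine (Walk.cons_isPath_iff _ _).mpr ⟨Walk.bypass_isPath _, fun h ↦ hv i ?_⟩
    simpa using Walk.support_bypass_subset_support _ h
  · rcases hW i x hxi with rfl | hxi
    · rfl
    rcases hW j x hxj with rfl | hxj
    · rfl
    exact (L.pairwise_disjoint hij hxi hxj).elim

/-- Fan version of Menger's theorem for `k = 3`: in a finite graph, if `v ∉ S`
and `v` cannot be separated from `S` by deleting at most two vertices distinct
from `v`, then there is a `3`-fan from `v` to `S`. -/
theorem not_separated_threeFan {α : Type} [Fintype α] (G : SimpleGraph α)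
    (v : α) (S : Set α) (hvS : v ∉ S)
    (h : ∀ X : Set α, v ∉ X → X.ncard ≤ 2 →
      ∃ w ∈ S, w ∉ X ∧ ∃ p : G.Walk v w, p.IsPath ∧ ∀ x ∈ p.support, x ∉ X) :
    Nonempty (ThreeFan G v S) := by
  have hsep : ∀ X, (G.deleteIncidenceSet v).Separates (G.neighborSet v) S X → 3 ≤ X.ncard := by
    intro X hX
    by_contra! hX3
    obtain ⟨w, hwS, -, p, hp, hpX⟩ := h (X \ {v}) (fun hv ↦ hv.2 rfl)
      ((Set.ncard_sdiff_singleton_le X v).trans (by omega))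
    obtain ⟨x, hx, hxX⟩ :=
      hX.exists_mem_support_diff_of_isPath hwS (ne_of_mem_of_not_mem hwS hvS).symm hp
    exact hpX x hx hxX
  obtain ⟨L⟩ := SimpleGraph.nonempty_disjointWalks_of_forall_separates _ _ _ hsep
  exact L.nonempty_threeFan
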